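/- Let n be a positive integer, let A and B be diagonal positive definite real n×n matrices, and let a, b ∈ ℝⁿ. For λ ∈ [0,1] define m_λ = (λA + (1−λ)B)⁻¹(λA a + (1−λ)B b). If for some λ̃ ∈ [0,1] the point m_{λ̃} lies outside the ellipsoid E(B, b), i.e., ‖m_{λ̃} − b‖_B > 1, then for every λ ∈ [λ̃, 1] the point m_λ also lies outside E(B, b): ‖m_λ − b‖_B > 1. -/

import Mathlib

open Matrix

/-- The path point `m_λ = (λA + (1-λ)B)⁻¹ (λA a + (1-λ)B b)`. -/
noncomputable def mPath {n : ℕ} (A B : Matrix (Fin n) (Fin n) ℝ) (a b : Fin n → ℝ)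
    (lam : ℝ) : Fin n → ℝ :=
  (lam • A + (1 - lam) • B)⁻¹ *ᵥ (lam • (A *ᵥ a) + (1 - lam) • (B *ᵥ b))

/-- The norm `‖w‖_M = √(wᵀ M w)`. -/
noncomputable def matNorm {n : ℕ} (M : Matrix (Fin n) (Fin n) ℝ) (w : Fin n → ℝ) : ℝ :=
  Real.sqrt (w ⬝ᵥ (M *ᵥ w))

/-- The ellipsoid `E(M, m) = {x | ‖x - m‖_M ≤ 1}`. -/
noncomputable def ellipsoid {n : ℕ} (M : Matrix (Fin n) (Fin n) ℝ) (m : Fin n → ℝ) :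
    Set (Fin n → ℝ) :=
  {x | matNorm M (x - m) ≤ 1}

/-!
For diagonal `A = diag α` and `B = diag β` everything decouples coordinatewise:
`(m_λ - b)ᵢ = wᵢ(λ) (aᵢ - bᵢ)` with `wᵢ(λ) = λαᵢ / (λαᵢ + (1-λ)βᵢ) ∈ [0, 1]`, and each `wᵢ`
is nondecreasing on `[0, 1]`. Hence every term `βᵢ wᵢ(λ)² (aᵢ - bᵢ)²` of `‖m_λ - b‖_B²` is
nondecreasing in `λ`, and so is the norm.
-/

noncomputable def pathWeight {ι : Type*} (x y : ι → ℝ) (t : ℝ) (i : ι) : ℝ :=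
  t * x i / (t * x i + (1 - t) * y i)

lemma convex_comb_pos {x y t : ℝ} (hx : 0 < x) (hy : 0 < y) (ht0 : 0 ≤ t) (ht1 : t ≤ 1) :
    0 < t * x + (1 - t) * y :=
  convex_Ioi (0 : ℝ) hx hy ht0 (sub_nonneg.2 ht1) (by ring)

lemma pathWeight_nonneg {ι : Type*} {x y : ι → ℝ} {i : ι} (hx : 0 < x i) (hy : 0 < y i)
    {t : ℝ} (ht0 : 0 ≤ t) (ht1 : t ≤ 1) : 0 ≤ pathWeight x y t i :=
  div_nonneg (mul_nonneg ht0 hx.le) (convex_comb_pos hx hy ht0 ht1).le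

lemma pathWeight_mono {ι : Type*} {x y : ι → ℝ} {i : ι} (hx : 0 < x i) (hy : 0 < y i)
    {s t : ℝ} (hs0 : 0 ≤ s) (hst : s ≤ t) (ht1 : t ≤ 1) :
    pathWeight x y s i ≤ pathWeight x y t i := by
  have hs := convex_comb_pos hx hy hs0 (hst.trans ht1)
  have ht := convex_comb_pos hx hy (hs0.trans hst) ht1
  rw [pathWeight, pathWeight, div_le_div_iff₀ hs ht]
  -- after cancelling `s t x²`, the inequality reads `s (1 - t) x y ≤ t (1 - s) x y`
  have hxy : 0 ≤ (t - s) * x i * y i := by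
    have := sub_nonneg.2 hst; positivity
  nlinarith

lemma mPath_diagonal_sub_apply {n : ℕ} (x y : Fin n → ℝ) (a b : Fin n → ℝ) (t : ℝ)
    (hne : ∀ i, t * x i + (1 - t) * y i ≠ 0) (i : Fin n) :
    (mPath (diagonal x) (diagonal y) a b t - b) i = pathWeight x y t i * (a i - b i) := by
  have hinv : (t • diagonal x + (1 - t) • diagonal y)⁻¹
      = diagonal (fun j => (t * x j + (1 - t) * y j)⁻¹) := by
    rw [← diagonal_smul, ← diagonal_smul, diagonal_add]
    refine inv_eq_right_inv ?_
    rw [diagonal_mul_diagonal, ← diagonal_one]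
    exact congrArg diagonal (funext fun j => mul_inv_cancel₀ (hne j))
  simp only [mPath, hinv, Pi.sub_apply, mulVec_diagonal, Pi.add_apply, Pi.smul_apply,
    smul_eq_mul, pathWeight]
  field_simp [hne i]
  ring

lemma matNorm_diagonal {n : ℕ} (d w : Fin n → ℝ) :
    matNorm (diagonal d) w = Real.sqrt (∑ i, d i * w i ^ 2) := by
  simp only [matNorm, dotProduct, mulVec_diagonal]
  congr 1
  exact Finset.sum_congr rfl fun i _ => by ring

lemma matNorm_diagonal_le_of_abs_le {n : ℕ} {d v w : Fin n → ℝ}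
    (hd : ∀ i, 0 ≤ d i) (hvw : ∀ i, |v i| ≤ |w i|) :
    matNorm (diagonal d) v ≤ matNorm (diagonal d) w := by
  rw [matNorm_diagonal, matNorm_diagonal]
  exact Real.sqrt_le_sqrt <| Finset.sum_le_sum fun i _ =>
    mul_le_mul_of_nonneg_left (sq_le_sq.2 (hvw i)) (hd i)

theorem mPath_stays_outside_B_general {n : ℕ}
    (A B : Matrix (Fin n) (Fin n) ℝ) (dA dB : Fin n → ℝ)
    (hA : A = Matrix.diagonal dA) (hB : B = Matrix.diagonal dB)
    (hdA : ∀ i, 0 < dA i) (hdB : ∀ i, 0 < dB i)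
    (a b : Fin n → ℝ)
    (ltil : ℝ) (h0 : 0 ≤ ltil) (h1 : ltil ≤ 1)
    (hout : 1 < matNorm B (mPath A B a b ltil - b)) :
    ∀ lam : ℝ, ltil ≤ lam → lam ≤ 1 → 1 < matNorm B (mPath A B a b lam - b) := by
  subst hA hB
  intro lam hl hl1
  have hsub : ∀ t, 0 ≤ t → t ≤ 1 → ∀ i,
      (mPath (diagonal dA) (diagonal dB) a b t - b) i = pathWeight dA dB t i * (a i - b i) :=
    fun t ht0 ht1 => mPath_diagonal_sub_apply dA dB a b t
      fun i => (convex_comb_pos (hdA i) (hdB i) ht0 ht1).ne'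
  refine hout.trans_le (matNorm_diagonal_le_of_abs_le (fun i => (hdB i).le) fun i => ?_)
  rw [hsub ltil h0 h1, hsub lam (h0.trans hl) hl1, abs_mul, abs_mul,
    abs_of_nonneg (pathWeight_nonneg (hdA i) (hdB i) h0 h1),
    abs_of_nonneg (pathWeight_nonneg (hdA i) (hdB i) (h0.trans hl) hl1)]
  exact mul_le_mul_of_nonneg_right (pathWeight_mono (hdA i) (hdB i) h0 hl hl1) (abs_nonneg _)

theorem mPath_stays_outside_B {n : ℕ} (hn : 0 < n)
    (A B : Matrix (Fin n) (Fin n) ℝ) (dA dB : Fin n → ℝ)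
    (hA : A = Matrix.diagonal dA) (hB : B = Matrix.diagonal dB)
    (hdA : ∀ i, 0 < dA i) (hdB : ∀ i, 0 < dB i)
    (a b : Fin n → ℝ)
    (ltil : ℝ) (h0 : 0 ≤ ltil) (h1 : ltil ≤ 1)
    (hout : 1 < matNorm B (mPath A B a b ltil - b)) :
    ∀ lam : ℝ, ltil ≤ lam → lam ≤ 1 → 1 < matNorm B (mPath A B a b lam - b) :=
  mPath_stays_outside_B_general A B dA dB hA hB hdA hdB a b ltil h0 h1 hout
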